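/- arXiv:math/0202202 — 2 statements merged into one kernel-verified Lean document; each statement's English description precedes it below -/
import Mathlib

section
/- Suppose g : ℝ × ℝ^{2N} → ℝ^{2N} is continuous and there is a real symmetric 2N×2N matrix C such that ⟨g(t,ξ), JCξ⟩ > 0 for all t ∈ ℝ and all ξ ∈ ℝ^{2N} \ {0}. Then the only solution x ∈ H¹(ℝ, ℝ^{2N}) ∩ C¹(ℝ, ℝ^{2N}) of Jx′(t) = g(t, x(t)) with x(t) → 0 as |t| → ∞ is x ≡ 0. -/
open MeasureTheory Filter Topology
open scoped RealInnerProductSpace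

/-!
The quadratic form `φ t = ⟪C (x t), x t⟫` has derivative `2 ⟪g t (x t), J (C (x t))⟫ ≥ 0` along
a solution, so `φ` is monotone; since it tends to `0` at both ends of `ℝ` it vanishes identically.
Then its derivative vanishes too, which by strict positivity forces `x t = 0`.
-/

theorem Monotone.eq_of_tendsto_atBot_atTop {α β : Type*} [Preorder α] [IsDirectedOrder α]
    [IsCodirectedOrder α] [TopologicalSpace β] [PartialOrder β] [OrderClosedTopology β]
    {f : α → β} {b : β} (hf : Monotone f) (hbot : Tendsto f atBot (𝓝 b))
    (htop : Tendsto f atTop (𝓝 b)) (a : α) : f a = b :=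
  le_antisymm (hf.ge_of_tendsto htop a) (hf.le_of_tendsto hbot a)

section InnerProductSpace

variable {E : Type*} [NormedAddCommGroup E] [InnerProductSpace ℝ E]

theorem LinearMap.IsSymmetric.hasDerivAt_inner_apply_self {C : E →L[ℝ] E}
    (hC : (C : E →ₗ[ℝ] E).IsSymmetric) {x : ℝ → E} {x' : E} {t : ℝ}
    (hx : HasDerivAt x x' t) :
    HasDerivAt (fun s ↦ ⟪C (x s), x s⟫) (2 * ⟪C (x t), x'⟫) t := by
  have hCx : HasDerivAt (fun s ↦ C (x s)) (C x') t := C.hasFDerivAt.comp_hasDerivAt t hx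
  refine (hCx.inner ℝ hx).congr_deriv ?_
  have hsymm : ⟪C x', x t⟫ = ⟪C (x t), x'⟫ := by
    rw [real_inner_comm]; exact (hC (x t) x').symm
  rw [hsymm]; ring

theorem hasDerivAt_inner_apply_self_of_hamiltonian {J C : E →L[ℝ] E}
    (hJ2 : ∀ v, J (J v) = -v) (hJa : ∀ v w, ⟪J v, w⟫ = -⟪v, J w⟫)
    (hC : (C : E →ₗ[ℝ] E).IsSymmetric) {x : ℝ → E} {x' y : E} {t : ℝ}
    (hx : HasDerivAt x x' t) (hode : J x' = y) :
    HasDerivAt (fun s ↦ ⟪C (x s), x s⟫) (2 * ⟪y, J (C (x t))⟫) t := by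
  have hx' : x' = -J y := by rw [← hode, hJ2, neg_neg]
  convert hC.hasDerivAt_inner_apply_self hx using 2
  rw [hx', inner_neg_right, ← neg_neg ⟪y, J (C (x t))⟫, ← hJa, real_inner_comm]

end InnerProductSpace

theorem stmt12_general {N : ℕ}
    (J : EuclideanSpace ℝ (Fin (2 * N)) →L[ℝ] EuclideanSpace ℝ (Fin (2 * N)))
    (hJ2 : ∀ v, J (J v) = -v) (hJa : ∀ v w, ⟪J v, w⟫ = -⟪v, J w⟫)
    (g : ℝ → EuclideanSpace ℝ (Fin (2 * N)) → EuclideanSpace ℝ (Fin (2 * N)))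
    (C : EuclideanSpace ℝ (Fin (2 * N)) →L[ℝ] EuclideanSpace ℝ (Fin (2 * N)))
    (hCsymm : ∀ v w, ⟪C v, w⟫ = ⟪v, C w⟫)
    (hpos : ∀ (t : ℝ) (ξ : EuclideanSpace ℝ (Fin (2 * N))), ξ ≠ 0 →
      0 < ⟪g t ξ, J (C ξ)⟫)
    (x x' : ℝ → EuclideanSpace ℝ (Fin (2 * N)))
    (hx : ∀ t, HasDerivAt x (x' t) t)
    (hode : ∀ t, J (x' t) = g t (x t))
    (hdecay : Tendsto x (cocompact ℝ) (nhds 0)) :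
    ∀ t, x t = 0 := by
  set φ : ℝ → ℝ := fun t ↦ ⟪C (x t), x t⟫
  have hφ' t : HasDerivAt φ (2 * ⟪g t (x t), J (C (x t))⟫) t :=
    hasDerivAt_inner_apply_self_of_hamiltonian hJ2 hJa hCsymm (hx t) (hode t)
  have hφ'_nonneg t : 0 ≤ 2 * ⟪g t (x t), J (C (x t))⟫ := by
    by_cases h : x t = 0
    · simp [h]
    · linarith [hpos t (x t) h]
  have hmono : Monotone φ := monotone_of_hasDerivAt_nonneg hφ' hφ'_nonneg
  have hφ_decay : Tendsto φ (cocompact ℝ) (𝓝 0) := by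
    have hquad := (C.continuous.inner (𝕜 := ℝ) continuous_id).tendsto 0
    simpa only [map_zero, inner_zero_left, id, Function.comp_def] using hquad.comp hdecay
  have hφ_zero : φ = fun _ ↦ 0 := funext <| hmono.eq_of_tendsto_atBot_atTop
    (hφ_decay.mono_left atBot_le_cocompact) (hφ_decay.mono_left atTop_le_cocompact)
  intro t
  by_contra hne
  have hφ'_zero := (hφ' t).unique (hφ_zero ▸ hasDerivAt_const t (0 : ℝ))
  linarith [hpos t (x t) hne]

/-- Theorem 5.3(a): If `g` is continuous and there is a real
symmetric matrix `C` with `⟨g(t,ξ), JCξ⟩ > 0` for all `t` and `ξ ≠ 0`, then the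
only `H¹ ∩ C¹` solution of `Jx′(t) = g(t,x(t))` vanishing at infinity is `x ≡ 0`. -/
theorem stmt12 {N : ℕ}
    (J : EuclideanSpace ℝ (Fin (2 * N)) →L[ℝ] EuclideanSpace ℝ (Fin (2 * N)))
    (hJ2 : ∀ v, J (J v) = -v) (hJa : ∀ v w, ⟪J v, w⟫ = -⟪v, J w⟫)
    (g : ℝ → EuclideanSpace ℝ (Fin (2 * N)) → EuclideanSpace ℝ (Fin (2 * N)))
    (hg : Continuous fun p : ℝ × EuclideanSpace ℝ (Fin (2 * N)) => g p.1 p.2)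
    (C : EuclideanSpace ℝ (Fin (2 * N)) →L[ℝ] EuclideanSpace ℝ (Fin (2 * N)))
    (hCsymm : ∀ v w, ⟪C v, w⟫ = ⟪v, C w⟫)
    (hpos : ∀ (t : ℝ) (ξ : EuclideanSpace ℝ (Fin (2 * N))), ξ ≠ 0 →
      0 < ⟪g t ξ, J (C ξ)⟫)
    (x x' : ℝ → EuclideanSpace ℝ (Fin (2 * N)))
    (hx : ∀ t, HasDerivAt x (x' t) t) (hx'cont : Continuous x')
    (hxL2 : MemLp x 2 (volume : Measure ℝ)) (hx'L2 : MemLp x' 2 (volume : Measure ℝ))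
    (hode : ∀ t, J (x' t) = g t (x t))
    (hdecay : Tendsto x (cocompact ℝ) (nhds 0)) :
    ∀ t, x t = 0 :=
  stmt12_general J hJ2 hJa g C hCsymm hpos x x' hx hode hdecay
end

section
/- Let A : [a,b] → Φ₀(X,Y) be a C¹ path of Fredholm operators of index zero between Banach spaces, and let λ₀ ∈ (a,b) be such that A′(λ₀)[ker A(λ₀)] ⊕ range A(λ₀) = Y (topological direct sum). Then there exists ε > 0 with [λ₀−ε, λ₀+ε] ⊂ [a,b] such that A(λ) is an isomorphism from X onto Y for every λ ∈ [λ₀−ε, λ₀+ε] \ {λ₀}. -/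
open Filter Topology

/-- Fredholm of index zero. -/
def IsFredholmIndexZero {X Y : Type*} [NormedAddCommGroup X] [NormedSpace ℝ X]
    [NormedAddCommGroup Y] [NormedSpace ℝ Y] (L : X →L[ℝ] Y) : Prop :=
  IsClosed (LinearMap.range (L : X →ₗ[ℝ] Y) : Set Y) ∧
    FiniteDimensional ℝ (LinearMap.ker (L : X →ₗ[ℝ] Y)) ∧
    Module.finrank ℝ (LinearMap.ker (L : X →ₗ[ℝ] Y)) =
      Module.finrank ℝ (Y ⧸ LinearMap.range (L : X →ₗ[ℝ] Y))

/-!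
Write `T = A λ₀`, `D = A'(λ₀)`. Transversality together with `dim ker T = codim range T` makes
`(n, x) ↦ D n + T x` an isomorphism from `ker T × X₀` onto `Y`, where `X₀` is a closed complement
of `ker T`; its inverse yields `G₁ : Y → ker T` and `G₂ : Y → X` with `D G₁ + T G₂ = 1`.
Then `A(λ) ((λ - λ₀)⁻¹ G₁ + G₂) = 1 + ((A(λ) - A(λ₀))/(λ - λ₀) - D) G₁ + (A(λ) - A(λ₀)) G₂`
tends to `1`, hence is invertible for `λ ≠ λ₀` close to `λ₀`, so `A(λ)` is onto; being Fredholm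
of index zero, it is then also injective.
-/

section
variable {𝕜 X Y : Type*} [NontriviallyNormedField 𝕜] [NormedAddCommGroup X] [NormedSpace 𝕜 X]
  [NormedAddCommGroup Y] [NormedSpace 𝕜 Y]

theorem comp_inv_sub_smul_add_eq {A : 𝕜 → X →L[𝕜] Y} {D : X →L[𝕜] Y} {t₀ : 𝕜}
    {G₁ G₂ : Y →L[𝕜] X} (h₁ : A t₀ ∘L G₁ = 0) (h₂ : D ∘L G₁ + A t₀ ∘L G₂ = 1) (t : 𝕜) :
    A t ∘L ((t - t₀)⁻¹ • G₁ + G₂) = 1 + ((slope A t₀ t - D) ∘L G₁ + (A t - A t₀) ∘L G₂) := by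
  rw [← h₂, slope_def_module, ContinuousLinearMap.sub_comp, ContinuousLinearMap.smul_comp,
    ContinuousLinearMap.sub_comp, ContinuousLinearMap.sub_comp, h₁, sub_zero,
    ContinuousLinearMap.comp_add, ContinuousLinearMap.comp_smul]
  abel

theorem HasDerivAt.eventually_surjective_of_comp_eq [CompleteSpace Y] {A : 𝕜 → X →L[𝕜] Y}
    {D : X →L[𝕜] Y} {t₀ : 𝕜} (hA : HasDerivAt A D t₀) {G₁ G₂ : Y →L[𝕜] X}
    (h₁ : A t₀ ∘L G₁ = 0) (h₂ : D ∘L G₁ + A t₀ ∘L G₂ = 1) :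
    ∀ᶠ t in 𝓝[≠] t₀, Function.Surjective (A t) := by
  have hslope : Tendsto (fun t => (slope A t₀ t - D) ∘L G₁) (𝓝[≠] t₀) (𝓝 0) :=
    ((ContinuousLinearMap.precomp Y G₁).continuous.tendsto' 0 0 (by simp)).comp
      (tendsto_sub_nhds_zero_iff.mpr (hasDerivAt_iff_tendsto_slope.mp hA))
  have hcont : Tendsto (fun t => (A t - A t₀) ∘L G₂) (𝓝[≠] t₀) (𝓝 0) :=
    ((ContinuousLinearMap.precomp Y G₂).continuous.tendsto' 0 0 (by simp)).comp
      (tendsto_sub_nhds_zero_iff.mpr (hA.continuousAt.tendsto.mono_left nhdsWithin_le_nhds))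
  have hlim : Tendsto (fun t => A t ∘L ((t - t₀)⁻¹ • G₁ + G₂)) (𝓝[≠] t₀) (𝓝 1) := by
    simpa only [comp_inv_sub_smul_add_eq h₁ h₂, add_zero] using (hslope.add hcont).const_add 1
  filter_upwards [hlim.eventually (Units.isOpen.mem_nhds isUnit_one)] with t ht
  rw [ContinuousLinearMap.isUnit_iff_bijective, ContinuousLinearMap.coe_comp] at ht
  exact ht.2.of_comp
end

namespace LinearMap

variable {R M N : Type*} [Ring R] [AddCommGroup M] [Module R M] [AddCommGroup N] [Module R N]

theorem bijective_coprod_domRestrict_ker {T D : M →ₗ[R] N}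
    (hinj : Function.Injective (D.domRestrict (ker T)))
    (hc : IsCompl ((ker T).map D) (range T)) {M₀ : Submodule R M} (hM₀ : IsCompl (ker T) M₀) :
    Function.Bijective ((D.domRestrict (ker T)).coprod (T.domRestrict M₀)) := by
  constructor
  · rw [← ker_eq_bot, ker_eq_bot']
    rintro ⟨n, x⟩ h
    have hsum : D n + T x = 0 := h
    have hDn : D n = 0 := by
      have hmem : D n ∈ (ker T).map D ⊓ range T :=
        ⟨Submodule.mem_map_of_mem n.2,
          eq_neg_of_add_eq_zero_left hsum ▸ neg_mem (mem_range_self T x)⟩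
      simpa [hc.inf_eq_bot] using hmem
    have hn : n = 0 := hinj (by simpa using hDn)
    have hx : (x : M) ∈ ker T ⊓ M₀ := ⟨by simpa [hDn] using hsum, x.2⟩
    rw [hM₀.inf_eq_bot, Submodule.mem_bot] at hx
    simp [hn, Subtype.ext_iff, hx]
  · intro y
    obtain ⟨z, ⟨n, hn, rfl⟩, r, ⟨x, rfl⟩, rfl⟩ :=
      Submodule.mem_sup.mp (hc.sup_eq_top ▸ Submodule.mem_top (x := y))
    obtain ⟨k, hk, x₀, hx₀, rfl⟩ :=
      Submodule.mem_sup.mp (hM₀.sup_eq_top ▸ Submodule.mem_top (x := x))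
    refine ⟨(⟨n, hn⟩, ⟨x₀, hx₀⟩), ?_⟩
    simp [mem_ker.mp hk]

end LinearMap

namespace IsFredholmIndexZero

variable {X Y : Type*} [NormedAddCommGroup X] [NormedSpace ℝ X] [NormedAddCommGroup Y]
  [NormedSpace ℝ Y] {T : X →L[ℝ] Y}

theorem injective_of_surjective (hT : IsFredholmIndexZero T) (hs : Function.Surjective T) :
    Function.Injective T := by
  obtain ⟨-, hfin, hrank⟩ := hT
  rw [LinearMap.range_eq_top.mpr hs,
    Module.finrank_zero_of_subsingleton (M := Y ⧸ (⊤ : Submodule ℝ Y)),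
    Submodule.finrank_eq_zero] at hrank
  exact LinearMap.ker_eq_bot.mp hrank

theorem injective_domRestrict_of_isCompl (hT : IsFredholmIndexZero T) {D : X →L[ℝ] Y}
    (hc : IsCompl ((LinearMap.ker (T : X →ₗ[ℝ] Y)).map (D : X →ₗ[ℝ] Y))
      (LinearMap.range (T : X →ₗ[ℝ] Y))) :
    Function.Injective ((D : X →ₗ[ℝ] Y).domRestrict (LinearMap.ker (T : X →ₗ[ℝ] Y))) := by
  obtain ⟨-, hfin, hrank⟩ := hT
  have hrange :=
    ((D : X →ₗ[ℝ] Y).domRestrict (LinearMap.ker (T : X →ₗ[ℝ] Y))).finrank_range_add_finrank_ker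
  rw [LinearMap.range_domRestrict, ← (Submodule.quotientEquivOfIsCompl _ _ hc.symm).finrank_eq,
    ← hrank, add_eq_left, Submodule.finrank_eq_zero] at hrange
  exact LinearMap.ker_eq_bot.mp hrange

theorem exists_comp_eq_zero_and_add_comp_eq_one [CompleteSpace X] [CompleteSpace Y]
    (hT : IsFredholmIndexZero T) {D : X →L[ℝ] Y}
    (hc : IsCompl ((LinearMap.ker (T : X →ₗ[ℝ] Y)).map (D : X →ₗ[ℝ] Y))
      (LinearMap.range (T : X →ₗ[ℝ] Y))) :
    ∃ G₁ G₂ : Y →L[ℝ] X, T ∘L G₁ = 0 ∧ D ∘L G₁ + T ∘L G₂ = 1 := by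
  have hinj := hT.injective_domRestrict_of_isCompl hc
  have : FiniteDimensional ℝ (LinearMap.ker (T : X →ₗ[ℝ] Y)) := hT.2.1
  obtain ⟨X₀, hX₀closed, hX₀⟩ :=
    (Submodule.ClosedComplemented.of_finiteDimensional
      (LinearMap.ker (T : X →ₗ[ℝ] Y))).exists_isClosed_isCompl
  have := hX₀closed.completeSpace_coe
  let Φ : (LinearMap.ker (T : X →ₗ[ℝ] Y) × X₀) →L[ℝ] Y :=
    (D ∘L (LinearMap.ker (T : X →ₗ[ℝ] Y)).subtypeL).coprod (T ∘L X₀.subtypeL)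
  have hΦ : Function.Bijective Φ := LinearMap.bijective_coprod_domRestrict_ker hinj hc hX₀
  let e := ContinuousLinearEquiv.ofBijective Φ (LinearMap.ker_eq_bot.mpr hΦ.1)
    (LinearMap.range_eq_top.mpr hΦ.2)
  let Ψ : Y →L[ℝ] LinearMap.ker (T : X →ₗ[ℝ] Y) × X₀ := e.symm
  refine ⟨(LinearMap.ker (T : X →ₗ[ℝ] Y)).subtypeL ∘L .fst ℝ _ _ ∘L Ψ,
    X₀.subtypeL ∘L .snd ℝ _ _ ∘L Ψ, ?_, ?_⟩
  · ext y
    exact (e.symm y).1.2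
  · ext y
    exact e.apply_symm_apply y

end IsFredholmIndexZero

section Icc

variable {α : Type*} [TopologicalSpace α] [AddCommGroup α] [LinearOrder α] [IsOrderedAddMonoid α]
  [OrderTopology α] [NoMaxOrder α] [DenselyOrdered α]

theorem Filter.Eventually.exists_pos_Icc_subset_and_forall_ne {x : α} {s : Set α} {p : α → Prop}
    (hp : ∀ᶠ y in 𝓝[≠] x, p y) (hs : s ∈ 𝓝 x) :
    ∃ ε > 0, Set.Icc (x - ε) (x + ε) ⊆ s ∧ ∀ y ∈ Set.Icc (x - ε) (x + ε), y ≠ x → p y := by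
  obtain ⟨ε, hε, hsub⟩ :=
    (nhds_basis_Icc_pos x).mem_iff.mp (inter_mem hs (eventually_nhdsWithin_iff.mp hp))
  exact ⟨ε, hε, fun y hy => (hsub hy).1, fun y hy hne => (hsub hy).2 hne⟩

end Icc

theorem stmt16_general {X Y : Type*} [NormedAddCommGroup X] [NormedSpace ℝ X] [CompleteSpace X]
    [NormedAddCommGroup Y] [NormedSpace ℝ Y] [CompleteSpace Y]
    (a b : ℝ)
    (A A' : ℝ → (X →L[ℝ] Y))
    (hA : ∀ lam ∈ Set.Icc a b, HasDerivAt A (A' lam) lam)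
    (hFred : ∀ lam ∈ Set.Icc a b, IsFredholmIndexZero (A lam))
    (lam0 : ℝ) (hlam0 : lam0 ∈ Set.Ioo a b)
    (htrans_sup : (LinearMap.ker ((A lam0 : X →L[ℝ] Y) : X →ₗ[ℝ] Y)).map
        ((A' lam0 : X →L[ℝ] Y) : X →ₗ[ℝ] Y) ⊔
        LinearMap.range ((A lam0 : X →L[ℝ] Y) : X →ₗ[ℝ] Y) = ⊤)
    (htrans_inf : (LinearMap.ker ((A lam0 : X →L[ℝ] Y) : X →ₗ[ℝ] Y)).map
        ((A' lam0 : X →L[ℝ] Y) : X →ₗ[ℝ] Y) ⊓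
        LinearMap.range ((A lam0 : X →L[ℝ] Y) : X →ₗ[ℝ] Y) = ⊥) :
    ∃ ε > 0, Set.Icc (lam0 - ε) (lam0 + ε) ⊆ Set.Icc a b ∧
      ∀ lam ∈ Set.Icc (lam0 - ε) (lam0 + ε), lam ≠ lam0 →
        Function.Bijective (A lam) := by
  have hlam0' : lam0 ∈ Set.Icc a b := Set.Ioo_subset_Icc_self hlam0
  obtain ⟨G₁, G₂, h₁, h₂⟩ := (hFred lam0 hlam0').exists_comp_eq_zero_and_add_comp_eq_one
    ⟨disjoint_iff.mpr htrans_inf, codisjoint_iff.mpr htrans_sup⟩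
  have hIcc : Set.Icc a b ∈ 𝓝 lam0 := Icc_mem_nhds hlam0.1 hlam0.2
  have hbij : ∀ᶠ lam in 𝓝[≠] lam0, Function.Bijective (A lam) := by
    filter_upwards [(hA lam0 hlam0').eventually_surjective_of_comp_eq h₁ h₂,
      nhdsWithin_le_nhds hIcc] with lam hsurj hlam
    exact ⟨(hFred lam hlam).injective_of_surjective hsurj, hsurj⟩
  exact hbij.exists_pos_Icc_subset_and_forall_ne hIcc

/-- part of Proposition 2.1: Let `A : [a,b] → Φ₀(X,Y)` be a `C¹`
path of index-zero Fredholm operators and `λ₀ ∈ (a,b)` with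
`A′(λ₀)[ker A(λ₀)] ⊕ range A(λ₀) = Y`.  Then for some `ε > 0` with
`[λ₀−ε,λ₀+ε] ⊆ [a,b]`, `A(λ)` is an isomorphism for all `λ ≠ λ₀` in that interval. -/
theorem stmt16 {X Y : Type*} [NormedAddCommGroup X] [NormedSpace ℝ X] [CompleteSpace X]
    [NormedAddCommGroup Y] [NormedSpace ℝ Y] [CompleteSpace Y]
    (a b : ℝ) (hab : a < b)
    (A A' : ℝ → (X →L[ℝ] Y))
    (hA : ∀ lam ∈ Set.Icc a b, HasDerivAt A (A' lam) lam)
    (hA'cont : ContinuousOn A' (Set.Icc a b))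
    (hFred : ∀ lam ∈ Set.Icc a b, IsFredholmIndexZero (A lam))
    (lam0 : ℝ) (hlam0 : lam0 ∈ Set.Ioo a b)
    (htrans_sup : (LinearMap.ker ((A lam0 : X →L[ℝ] Y) : X →ₗ[ℝ] Y)).map
        ((A' lam0 : X →L[ℝ] Y) : X →ₗ[ℝ] Y) ⊔
        LinearMap.range ((A lam0 : X →L[ℝ] Y) : X →ₗ[ℝ] Y) = ⊤)
    (htrans_inf : (LinearMap.ker ((A lam0 : X →L[ℝ] Y) : X →ₗ[ℝ] Y)).map
        ((A' lam0 : X →L[ℝ] Y) : X →ₗ[ℝ] Y) ⊓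
        LinearMap.range ((A lam0 : X →L[ℝ] Y) : X →ₗ[ℝ] Y) = ⊥) :
    ∃ ε > 0, Set.Icc (lam0 - ε) (lam0 + ε) ⊆ Set.Icc a b ∧
      ∀ lam ∈ Set.Icc (lam0 - ε) (lam0 + ε), lam ≠ lam0 →
        Function.Bijective (A lam) :=
  stmt16_general a b A A' hA hFred lam0 hlam0 htrans_sup htrans_inf
end
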